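/- arXiv:1703.00476 — 7 statements merged into one kernel-verified Lean document; each statement's English description precedes it below -/
import Mathlib

section
/- Assume that for every f ∈ ℝ^M_{≥0} with f ≠ 0 there exists i₀ ∈ {1,…,N} such that ⟨t_{i₀}/\hat{t}, f⟩ < 0 (no risk free investment). Then for every f ∈ G \ {0} there exists s₀ = s₀(f) > 0 such that TWR_N(s₀ f) = 0; moreover s₀ f ∈ ∂G₀, i.e. HPR_i(s₀ f) ≥ 0 for all i and HPR_{j₀}(s₀ f) = 0 for some j₀. -/
/-! Along the ray `s ↦ s • f` each holding period return is affine, `HPR_i(s f) = 1 + s c_i` with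
`c_i = ⟨t_i / t̂, f⟩`. No risk-free investment makes `min_i c_i` negative, and `s₀ = -1 / min_i c_i`
is the first zero: there every `HPR_i` is still nonnegative and the minimizing one vanishes. -/

theorem exists_pos_forall_one_add_mul_nonneg_and_eq_zero {ι : Type*} [Finite ι] {c : ι → ℝ}
    (hneg : ∃ i, c i < 0) :
    ∃ s, 0 < s ∧ (∀ i, 0 ≤ 1 + s * c i) ∧ ∃ j, 1 + s * c j = 0 := by
  obtain ⟨i₀, hi₀⟩ := hneg
  have : Nonempty ι := ⟨i₀⟩
  obtain ⟨j, hj⟩ := Finite.exists_min c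
  have hcj : c j < 0 := (hj i₀).trans_lt hi₀
  refine ⟨-1 / c j, div_pos_of_neg_of_neg neg_one_lt_zero hcj, fun i => ?_, j, ?_⟩
  · have : c i / c j ≤ 1 := (div_le_one_of_neg hcj).mpr (hj i)
    linarith [show -1 / c j * c i = -(c i / c j) by ring]
  · rw [div_mul_cancel₀ _ hcj.ne]
    norm_num

theorem stmt4_general (N M : ℕ) (T : Fin N → Fin M → ℝ) (that : Fin M → ℝ)
    (ha : ∀ f : Fin M → ℝ, (∀ k, 0 ≤ f k) → f ≠ 0 →
      ∃ i, ∑ k, (T i k / that k) * f k < 0)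
    (f : Fin M → ℝ) (hfpos : ∀ k, 0 ≤ f k)
    (hne : f ≠ 0) :
    ∃ s₀ : ℝ, 0 < s₀ ∧
      (∏ i, (1 + ∑ k, (T i k / that k) * (s₀ * f k))) = 0 ∧
      (∀ i, 0 ≤ 1 + ∑ k, (T i k / that k) * (s₀ * f k)) ∧
      ∃ j, 1 + ∑ k, (T j k / that k) * (s₀ * f k) = 0 := by
  obtain ⟨s, hs, hnonneg, j, hj⟩ :=
    exists_pos_forall_one_add_mul_nonneg_and_eq_zero (ha f hfpos hne)
  have hscale : ∀ i, ∑ k, (T i k / that k) * (s * f k) = s * ∑ k, (T i k / that k) * f k :=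
    fun i => by simp_rw [Finset.mul_sum, mul_left_comm]
  refine ⟨s, hs, ?_⟩
  simp only [hscale]
  exact ⟨Finset.prod_eq_zero (Finset.mem_univ j) hj, hnonneg, j, hj⟩

/-- Under the no-risk-free-investment assumption, every nonzero admissible
direction can be scaled so that the TWR vanishes, landing in ∂G₀. -/
theorem stmt4 (N M : ℕ) (T : Fin N → Fin M → ℝ) (that : Fin M → ℝ)
    (hthat : ∀ k, 0 < that k)
    (ha : ∀ f : Fin M → ℝ, (∀ k, 0 ≤ f k) → f ≠ 0 →
      ∃ i, ∑ k, (T i k / that k) * f k < 0)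
    (f : Fin M → ℝ) (hfpos : ∀ k, 0 ≤ f k)
    (hfG : ∀ i, 0 ≤ 1 + ∑ k, (T i k / that k) * f k)
    (hne : f ≠ 0) :
    ∃ s₀ : ℝ, 0 < s₀ ∧
      (∏ i, (1 + ∑ k, (T i k / that k) * (s₀ * f k))) = 0 ∧
      (∀ i, 0 ≤ 1 + ∑ k, (T i k / that k) * (s₀ * f k)) ∧
      ∃ j, 1 + ∑ k, (T j k / that k) * (s₀ * f k) = 0 :=
  stmt4_general N M T that ha f hfpos hne
end

section
/- Assume that for every nonzero f ∈ ℝ^M_{≥0} there exists i₀ with ⟨t_{i₀}/\hat{t}, f⟩ < 0. Then the set G = {f ∈ ℝ^M_{≥0} : ⟨t_i/\hat{t}, f⟩ ≥ −1 ∀i} is compact. -/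
/-!
On the unit vectors of the cone, a compact set, the continuous function `x ↦ minᵢ (L x)ᵢ` is
negative, hence bounded above by some `c < 0`. By homogeneity every `x` of the cone with
`-1 ≤ (L x)ᵢ` for all `i` then satisfies `-1 ≤ ‖x‖ c`, i.e. `‖x‖ ≤ -1/c`; a closed bounded set
in finite dimension is compact.
-/

theorem IsCompact.exists_neg_bound_of_forall_exists_neg {X ι : Type*} [TopologicalSpace X]
    [Finite ι] {K : Set X} (hK : IsCompact K) {φ : ι → X → ℝ} (hφ : ∀ i, Continuous (φ i))
    (hneg : ∀ x ∈ K, ∃ i, φ i x < 0) : ∃ c < 0, ∀ x ∈ K, ∃ i, φ i x ≤ c := by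
  rcases K.eq_empty_or_nonempty with rfl | ⟨x₀, hx₀⟩
  · exact ⟨-1, by norm_num, by simp⟩
  have := Fintype.ofFinite ι
  have hι : (Finset.univ : Finset ι).Nonempty := Finset.univ_nonempty_iff.2 ⟨(hneg x₀ hx₀).choose⟩
  let ψ : X → ℝ := fun x => Finset.univ.inf' hι fun i => φ i x
  have hψ : Continuous ψ := Continuous.finset_inf'_apply hι fun i _ => hφ i
  obtain ⟨y, hyK, hy⟩ := hK.exists_isMaxOn ⟨x₀, hx₀⟩ hψ.continuousOn
  refine ⟨ψ y, ?_, fun x hx => ?_⟩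
  · obtain ⟨i, hi⟩ := hneg y hyK
    exact (Finset.inf'_le _ (Finset.mem_univ i)).trans_lt hi
  · obtain ⟨i, -, hi⟩ := Finset.exists_mem_eq_inf' hι fun i => φ i x
    exact ⟨i, hi ▸ hy hx⟩

section Cone

variable {E ι : Type*} [NormedAddCommGroup E] [NormedSpace ℝ E] [FiniteDimensional ℝ E] [Finite ι]
  {C : Set E} (hC : IsClosed C) (hsmul : ∀ x ∈ C, ∀ t : ℝ, 0 < t → t • x ∈ C)
  (L : E →ₗ[ℝ] ι → ℝ) (hL : ∀ x ∈ C, x ≠ 0 → ∃ i, L x i < 0)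
include hC hsmul hL

theorem exists_norm_le_of_forall_exists_neg :
    ∃ R, ∀ x ∈ C, (∀ i, -1 ≤ L x i) → ‖x‖ ≤ R := by
  have hLi : ∀ i, Continuous fun x => L x i := fun i =>
    (continuous_apply i).comp L.continuous_of_finiteDimensional
  obtain ⟨c, hc, hcK⟩ := ((isCompact_sphere (0 : E) 1).inter_left hC)
    |>.exists_neg_bound_of_forall_exists_neg hLi
      fun x hx => hL x hx.1 (ne_zero_of_mem_unit_sphere ⟨x, hx.2⟩)
  refine ⟨(-c)⁻¹, fun x hx hLx => ?_⟩
  rcases eq_or_ne x 0 with rfl | hx0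
  · rw [norm_zero]
    exact (inv_pos.2 (neg_pos.2 hc)).le
  have hnx : 0 < ‖x‖ := norm_pos_iff.2 hx0
  obtain ⟨i, hi⟩ := hcK (‖x‖⁻¹ • x)
    ⟨hsmul x hx _ (inv_pos.2 hnx), mem_sphere_zero_iff_norm.2 (norm_smul_inv_norm hx0)⟩
  have hscale : L x i = ‖x‖ * L (‖x‖⁻¹ • x) i := by
    rw [map_smul, Pi.smul_apply, smul_eq_mul, mul_inv_cancel_left₀ hnx.ne']
  have : -1 ≤ ‖x‖ * c := (hLx i).trans (hscale ▸ mul_le_mul_of_nonneg_left hi hnx.le)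
  rw [inv_eq_one_div, le_div_iff₀ (neg_pos.2 hc)]
  linarith

theorem isCompact_setOf_neg_one_le_of_forall_exists_neg :
    IsCompact {x | x ∈ C ∧ ∀ i, -1 ≤ L x i} := by
  have hclosed : IsClosed {x | -1 ≤ L x} :=
    isClosed_le continuous_const L.continuous_of_finiteDimensional
  obtain ⟨R, hR⟩ := exists_norm_le_of_forall_exists_neg hC hsmul L hL
  refine Metric.isCompact_of_isClosed_isBounded (hC.inter hclosed)
    ((Metric.isBounded_iff_subset_closedBall 0).2 ⟨R, fun x hx => ?_⟩)
  simpa using hR x hx.1 hx.2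

end Cone

theorem stmt5_general (N M : ℕ) (T : Fin N → Fin M → ℝ) (that : Fin M → ℝ)
    (ha : ∀ f : Fin M → ℝ, (∀ k, 0 ≤ f k) → f ≠ 0 →
      ∃ i, ∑ k, (T i k / that k) * f k < 0) :
    IsCompact {f : Fin M → ℝ |
      (∀ k, 0 ≤ f k) ∧ ∀ i, -1 ≤ ∑ k, (T i k / that k) * f k} :=
  -- membership in `Set.Ici 0` and the entries of `mulVec` unfold definitionally to the sets above
  isCompact_setOf_neg_one_le_of_forall_exists_neg (C := Set.Ici 0) isClosed_Ici
    (fun _ hx _ ht => smul_nonneg ht.le hx) (Matrix.mulVecLin fun i k => T i k / that k) ha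

/-- Under the no-risk-free-investment assumption, the admissible set G is compact. -/
theorem stmt5 (N M : ℕ) (T : Fin N → Fin M → ℝ) (that : Fin M → ℝ)
    (hthat : ∀ k, 0 < that k)
    (ha : ∀ f : Fin M → ℝ, (∀ k, 0 ≤ f k) → f ≠ 0 →
      ∃ i, ∑ k, (T i k / that k) * f k < 0) :
    IsCompact {f : Fin M → ℝ |
      (∀ k, 0 ≤ f k) ∧ ∀ i, -1 ≤ ∑ k, (T i k / that k) * f k} :=
  stmt5_general N M T that ha
end

section
/- Under the no-risk-free-investment assumption (for every nonzero f ∈ ℝ^M_{≥0} there exists i with ⟨t_i/\hat{t}, f⟩ < 0), the set ∂G₀ = {f ∈ G : min_i ⟨t_i/\hat{t}, f⟩ = −1} equals the image of the compact set ∂B_ε(0) ∩ ℝ^M_{≥0} under the continuous map g(f) = f / |min_i ⟨t_i/\hat{t}, f⟩|, and is therefore compact and connected. -/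
/-!
Write `m f = min_i ⟨t_i/t̂, f⟩`. It is continuous and positively homogeneous, and by the
no-risk-free-investment assumption it is negative on `ℝ^M_{≥0} \ {0}`. Hence
`f ↦ |m f|⁻¹ • f` is continuous there, maps it onto `∂G₀ = {f ≥ 0 | m f = -1}`, and is
constant on rays. Every ray of the orthant meets the compact sphere piece `∂B_ε(0) ∩ ℝ^M_{≥0}`,
so `∂G₀` is its image (hence compact); `∂G₀` is also the image of the convex set
`ℝ^M_{≥0} \ {0}` (hence connected).
-/

open Finset

theorem Finset.inf'_eq_iff {α ι : Type*} [LinearOrder α] {s : Finset ι} (H : s.Nonempty)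
    (g : ι → α) (a : α) :
    s.inf' H g = a ↔ (∀ i ∈ s, a ≤ g i) ∧ ∃ i ∈ s, g i = a := by
  constructor
  · rintro rfl
    obtain ⟨j, hj, hjg⟩ := exists_mem_eq_inf' H g
    exact ⟨fun i hi => inf'_le g hi, j, hj, hjg.symm⟩
  · rintro ⟨hle, j, hj, rfl⟩
    exact le_antisymm (inf'_le g hj) (le_inf' H g hle)

theorem convex_Ici_zero_diff_zero {E : Type*} [AddCommGroup E] [PartialOrder E]
    [IsOrderedAddMonoid E] [Module ℝ E] [PosSMulMono ℝ E] :
    Convex ℝ (Set.Ici (0 : E) \ {0}) := by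
  rintro x ⟨hx, hx0⟩ y ⟨hy, hy0⟩ a b ha hb hab
  refine ⟨convex_Ici 0 hx hy ha hb hab, fun hxy => ?_⟩
  rcases ha.eq_or_lt with rfl | ha
  · rw [zero_add] at hab
    simp_all
  · have hax : a • x = 0 := le_antisymm
      (by rw [eq_neg_of_add_eq_zero_left hxy]; exact neg_nonpos.2 (smul_nonneg hb hy))
      (smul_nonneg ha.le hx)
    exact hx0 ((smul_eq_zero_iff_right ha.ne').1 hax)

section MinDot

variable {ι κ : Type*} [Fintype ι] [Nonempty ι] [Fintype κ] (w : ι → κ → ℝ)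

noncomputable def minDot (f : κ → ℝ) : ℝ := univ.inf' univ_nonempty fun i => w i ⬝ᵥ f

theorem minDot_eq_iff {f : κ → ℝ} {a : ℝ} :
    minDot w f = a ↔ (∀ i, a ≤ w i ⬝ᵥ f) ∧ ∃ i, w i ⬝ᵥ f = a := by
  simp [minDot, Finset.inf'_eq_iff]

theorem minDot_smul {c : ℝ} (hc : 0 ≤ c) (f : κ → ℝ) : minDot w (c • f) = c * minDot w f := by
  rw [minDot, minDot, apply_inf'_eq_inf'_comp _ (c * ·) fun x y => mul_min_of_nonneg x y hc]
  simp only [dotProduct_smul, smul_eq_mul, Function.comp_def]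

theorem continuous_minDot : Continuous (minDot w) :=
  Continuous.finset_inf'_apply _ fun i _ => by fun_prop

theorem setOf_nonneg_minDot_neg (hw : ∀ f : κ → ℝ, 0 ≤ f → f ≠ 0 → ∃ i, w i ⬝ᵥ f < 0) :
    {f | f ∈ Set.Ici 0 ∧ minDot w f < 0} = Set.Ici 0 \ {0} := by
  ext f
  refine ⟨fun ⟨hf, hmf⟩ => ⟨hf, fun h0 => ?_⟩, fun ⟨hf, hf0⟩ => ⟨hf, ?_⟩⟩
  · simp [minDot, Set.mem_singleton_iff.1 h0] at hmf
  · obtain ⟨i, hi⟩ := hw f hf hf0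
    exact (inf'_le _ (mem_univ i)).trans_lt hi

end MinDot

section NonnegSphere

variable {κ : Type*} [Fintype κ]

/-- `∂B_ε(0) ∩ ℝ^κ_{≥0}`, for the Euclidean norm. -/
def nonnegSphere (ε : ℝ) : Set (κ → ℝ) := {f | ∑ k, f k ^ 2 = ε ^ 2 ∧ ∀ k, 0 ≤ f k}

theorem isCompact_nonnegSphere (ε : ℝ) : IsCompact (nonnegSphere (κ := κ) ε) := by
  refine (isCompact_univ_pi fun _ => isCompact_Icc (a := -|ε|) (b := |ε|)).of_isClosed_subset
    ((isClosed_eq (by fun_prop) continuous_const).inter (isClosed_Ici (a := 0)))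
    fun f hf k _ => abs_le.1 (sq_le_sq.1 ?_)
  rw [← hf.1]
  exact single_le_sum (fun j _ => sq_nonneg (f j)) (mem_univ k)

theorem nonnegSphere_subset {ε : ℝ} (hε : ε ≠ 0) :
    nonnegSphere (κ := κ) ε ⊆ Set.Ici 0 \ {0} := fun f ⟨hsum, hf⟩ =>
  ⟨hf, by rintro rfl; exact (pow_ne_zero 2 hε) (by simpa using hsum.symm)⟩

theorem exists_pos_smul_mem_nonnegSphere {f : κ → ℝ} (hf : f ∈ Set.Ici 0 \ {0}) {ε : ℝ}
    (hε : 0 < ε) : ∃ c : ℝ, 0 < c ∧ c • f ∈ nonnegSphere ε := by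
  obtain ⟨j, hj⟩ := Function.ne_iff.1 hf.2
  have hq : 0 < ∑ k, f k ^ 2 :=
    sum_pos' (fun k _ => sq_nonneg (f k)) ⟨j, mem_univ j, sq_pos_of_ne_zero hj⟩
  refine ⟨ε / √(∑ k, f k ^ 2), by positivity, ?_, fun k => mul_nonneg (by positivity) (hf.1 k)⟩
  simp only [Pi.smul_apply, smul_eq_mul, mul_pow, ← mul_sum, div_pow, Real.sq_sqrt hq.le]
  field_simp

end NonnegSphere

section Normalize

variable {E : Type*} [AddCommGroup E] [Module ℝ E] {m : E → ℝ}

noncomputable def normalizeBy (m : E → ℝ) (f : E) : E := |m f|⁻¹ • f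

theorem map_normalizeBy (hm : ∀ c : ℝ, 0 < c → ∀ f, m (c • f) = c * m f) {f : E}
    (hf : m f < 0) : m (normalizeBy m f) = -1 := by
  rw [normalizeBy, hm _ (inv_pos.2 (abs_pos.2 hf.ne)), abs_of_neg hf, inv_neg, neg_mul,
    inv_mul_cancel₀ hf.ne]

theorem normalizeBy_smul (hm : ∀ c : ℝ, 0 < c → ∀ f, m (c • f) = c * m f) {c : ℝ} (hc : 0 < c)
    (f : E) : normalizeBy m (c • f) = normalizeBy m f := by
  rw [normalizeBy, normalizeBy, hm c hc, smul_smul, abs_mul, abs_of_pos hc, mul_inv,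
    mul_right_comm, inv_mul_cancel₀ hc.ne', one_mul]

theorem normalizeBy_of_eq_neg_one {f : E} (hf : m f = -1) : normalizeBy m f = f := by
  simp [normalizeBy, hf]

theorem setOf_eq_neg_one_eq_image_normalizeBy
    (hm : ∀ c : ℝ, 0 < c → ∀ f, m (c • f) = c * m f) {C K : Set E}
    (hC : ∀ c : ℝ, 0 < c → ∀ f ∈ C, c • f ∈ C) (hK : K ⊆ {f | f ∈ C ∧ m f < 0})
    (hray : ∀ f ∈ C, m f = -1 → ∃ c : ℝ, 0 < c ∧ c • f ∈ K) :
    {f | f ∈ C ∧ m f = -1} = normalizeBy m '' K := by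
  ext f
  constructor
  · rintro ⟨hfC, hf⟩
    obtain ⟨c, hc, hcK⟩ := hray f hfC hf
    exact ⟨c • f, hcK, by rw [normalizeBy_smul hm hc, normalizeBy_of_eq_neg_one hf]⟩
  · rintro ⟨g, hg, rfl⟩
    obtain ⟨hgC, hgneg⟩ := hK hg
    exact ⟨hC _ (inv_pos.2 (abs_pos.2 hgneg.ne)) g hgC, map_normalizeBy hm hgneg⟩

theorem continuousOn_normalizeBy [TopologicalSpace E] [ContinuousSMul ℝ E] (hm : Continuous m) :
    ContinuousOn (normalizeBy m) {f | m f ≠ 0} :=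
  (hm.abs.continuousOn.inv₀ fun _ hf => abs_ne_zero.2 hf).smul continuousOn_id

end Normalize

theorem stmt6_general (N M : ℕ) (hN : 0 < N) (hM : 0 < M)
    (T : Fin N → Fin M → ℝ) (that : Fin M → ℝ)
    (ha : ∀ f : Fin M → ℝ, (∀ k, 0 ≤ f k) → f ≠ 0 →
      ∃ i, ∑ k, (T i k / that k) * f k < 0)
    (ε : ℝ) (hε : 0 < ε) :
    {f : Fin M → ℝ | ((∀ k, 0 ≤ f k) ∧ ∀ i, -1 ≤ ∑ k, (T i k / that k) * f k) ∧
        ∃ i, ∑ k, (T i k / that k) * f k = -1} =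
      (fun f : Fin M → ℝ =>
        |Finset.univ.inf' (Finset.univ_nonempty_iff.mpr ⟨⟨0, hN⟩⟩)
          (fun i : Fin N => ∑ k, (T i k / that k) * f k)|⁻¹ • f) ''
        {f : Fin M → ℝ | (∑ k, f k ^ 2 = ε ^ 2) ∧ ∀ k, 0 ≤ f k} ∧
    IsCompact {f : Fin M → ℝ | ((∀ k, 0 ≤ f k) ∧ ∀ i, -1 ≤ ∑ k, (T i k / that k) * f k) ∧
        ∃ i, ∑ k, (T i k / that k) * f k = -1} ∧
    IsConnected {f : Fin M → ℝ | ((∀ k, 0 ≤ f k) ∧ ∀ i, -1 ≤ ∑ k, (T i k / that k) * f k) ∧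
        ∃ i, ∑ k, (T i k / that k) * f k = -1} := by
  have : Nonempty (Fin N) := ⟨⟨0, hN⟩⟩
  have : Nonempty (Fin M) := ⟨⟨0, hM⟩⟩
  set w : Fin N → Fin M → ℝ := fun i k => T i k / that k
  have hS : {f : Fin M → ℝ | ((∀ k, 0 ≤ f k) ∧ ∀ i, -1 ≤ ∑ k, (T i k / that k) * f k) ∧
      ∃ i, ∑ k, (T i k / that k) * f k = -1} = {f | f ∈ Set.Ici 0 ∧ minDot w f = -1} := by
    ext f
    simp [minDot_eq_iff, dotProduct, w, Pi.le_def, and_assoc]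
  have hm : ∀ c : ℝ, 0 < c → ∀ f, minDot w (c • f) = c * minDot w f :=
    fun c hc => minDot_smul w hc.le
  have hC : ∀ c : ℝ, 0 < c → ∀ f ∈ Set.Ici (0 : Fin M → ℝ), c • f ∈ Set.Ici 0 :=
    fun c hc f hf => Set.mem_Ici.2 (smul_nonneg hc.le hf)
  have hP := setOf_nonneg_minDot_neg w ha
  have hnorm : ContinuousOn (normalizeBy (minDot w)) (Set.Ici 0 \ {0}) :=
    (continuousOn_normalizeBy (continuous_minDot w)).mono fun f hf => (hP.symm ▸ hf).2.ne
  have hK : {f | f ∈ Set.Ici 0 ∧ minDot w f = -1} = normalizeBy (minDot w) '' nonnegSphere ε :=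
    setOf_eq_neg_one_eq_image_normalizeBy hm hC (hP ▸ nonnegSphere_subset hε.ne')
      fun f hf hmf => exists_pos_smul_mem_nonnegSphere ⟨hf, by rintro rfl; simp [minDot] at hmf⟩ hε
  refine ⟨hS.trans hK, ?_, ?_⟩
  · rw [hS, hK]
    exact (isCompact_nonnegSphere ε).image_of_continuousOn
      (hnorm.mono (nonnegSphere_subset hε.ne'))
  · rw [hS, setOf_eq_neg_one_eq_image_normalizeBy hm hC subset_rfl
      fun f hf hmf => ⟨1, one_pos, by simpa [hmf] using hf⟩, hP]
    exact (convex_Ici_zero_diff_zero.isConnected ⟨1, by simp⟩).image _ hnorm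

/-- ∂G₀ is the image of the compact set ∂B_ε(0) ∩ ℝ^M_{≥0} under the continuous
map f ↦ f / |min_i ⟨t_i/t̂, f⟩|, hence compact and connected. -/
theorem stmt6 (N M : ℕ) (hN : 0 < N) (hM : 0 < M)
    (T : Fin N → Fin M → ℝ) (that : Fin M → ℝ) (hthat : ∀ k, 0 < that k)
    (ha : ∀ f : Fin M → ℝ, (∀ k, 0 ≤ f k) → f ≠ 0 →
      ∃ i, ∑ k, (T i k / that k) * f k < 0)
    (ε : ℝ) (hε : 0 < ε) :
    {f : Fin M → ℝ | ((∀ k, 0 ≤ f k) ∧ ∀ i, -1 ≤ ∑ k, (T i k / that k) * f k) ∧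
        ∃ i, ∑ k, (T i k / that k) * f k = -1} =
      (fun f : Fin M → ℝ =>
        |Finset.univ.inf' (Finset.univ_nonempty_iff.mpr ⟨⟨0, hN⟩⟩)
          (fun i : Fin N => ∑ k, (T i k / that k) * f k)|⁻¹ • f) ''
        {f : Fin M → ℝ | (∑ k, f k ^ 2 = ε ^ 2) ∧ ∀ k, 0 ≤ f k} ∧
    IsCompact {f : Fin M → ℝ | ((∀ k, 0 ≤ f k) ∧ ∀ i, -1 ≤ ∑ k, (T i k / that k) * f k) ∧
        ∃ i, ∑ k, (T i k / that k) * f k = -1} ∧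
    IsConnected {f : Fin M → ℝ | ((∀ k, 0 ≤ f k) ∧ ∀ i, -1 ≤ ∑ k, (T i k / that k) * f k) ∧
        ∃ i, ∑ k, (T i k / that k) * f k = -1} :=
  stmt6_general N M hN hM T that ha ε hε
end

section
/- Assume ker T = {0}. If f₀ ∈ G \ ∂G₀ satisfies ∇TWR_N(f₀) = 0, then the Hessian of [TWR_N]^{1/N} at f₀ is negative definite; in particular [TWR_N]^{1/N} is strictly concave at f₀. -/
/-!
The Hessian is `-(TWR^{1/N}/N) • YᵀY`, where `Y` has rows `yᵢ = (tᵢ/t̂)/(1+⟨tᵢ/t̂,f₀⟩)`, so its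
quadratic form at `ψ` is `-(TWR^{1/N}/N) ‖Yψ‖²`. Since `Y` is `T` rescaled by invertible diagonal
matrices on both sides, `ker Y = ker T = 0`, hence `‖Yψ‖² > 0` for `ψ ≠ 0`.
-/

open Finset

section GramForm

variable {ι κ : Type*}

theorem quadForm_smul_gram_eq_sum_sq [Fintype ι] [Fintype κ] (y : ι → κ → ℝ) (c : ℝ)
    (ψ : κ → ℝ) :
    ∑ j, ∑ l, ψ j * (c * ∑ i, y i j * y i l) * ψ l = c * ∑ i, (∑ j, y i j * ψ j) ^ 2 := by
  simp_rw [sq, sum_mul_sum, mul_sum, sum_mul]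
  conv_lhs => enter [2, j]; rw [sum_comm]
  rw [sum_comm]
  exact sum_congr rfl fun i _ => sum_congr rfl fun j _ => sum_congr rfl fun l _ => by ring

theorem sum_sq_sum_mul_pos [Fintype ι] [Fintype κ] {y : ι → κ → ℝ}
    (hker : ∀ ψ : κ → ℝ, (∀ i, ∑ j, y i j * ψ j = 0) → ψ = 0) {ψ : κ → ℝ}
    (hψ : ψ ≠ 0) :
    0 < ∑ i, (∑ j, y i j * ψ j) ^ 2 := by
  refine (sum_nonneg fun i _ => sq_nonneg _).lt_of_ne' fun hzero => hψ (hker ψ fun i => ?_)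
  exact pow_eq_zero_iff two_ne_zero |>.mp <|
    (sum_eq_zero_iff_of_nonneg fun i _ => sq_nonneg _).mp hzero i (mem_univ i)

theorem ker_trivial_div_div [Fintype κ] {T : ι → κ → ℝ}
    (hker : ∀ ψ : κ → ℝ, (∀ i, ∑ k, T i k * ψ k = 0) → ψ = 0)
    {a : κ → ℝ} (ha : ∀ k, a k ≠ 0) {b : ι → ℝ} (hb : ∀ i, b i ≠ 0) :
    ∀ ψ : κ → ℝ, (∀ i, ∑ k, T i k / a k / b i * ψ k = 0) → ψ = 0 := by
  intro ψ hψ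
  have hscaled : (fun k => ψ k / a k) = 0 := hker _ fun i => by
    have hrow : ∑ k, T i k / a k / b i * ψ k = (∑ k, T i k * (ψ k / a k)) / b i := by
      rw [sum_div]
      exact sum_congr rfl fun k _ => by ring
    simpa [hrow, hb i] using hψ i
  funext k
  simpa [ha k] using congrFun hscaled k

end GramForm

theorem stmt9_general (N M : ℕ) (hN : 0 < N) (T : Fin N → Fin M → ℝ) (that : Fin M → ℝ)
    (hthat : ∀ k, 0 < that k)
    (hker : ∀ ψ : Fin M → ℝ, (∀ i, ∑ k, T i k * ψ k = 0) → ψ = 0)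
    (f0 : Fin M → ℝ)
    (hpos : ∀ i, 0 < 1 + ∑ k, (T i k / that k) * f0 k) :
    ∀ ψ : Fin M → ℝ, ψ ≠ 0 →
      (∑ j, ∑ l, ψ j *
        (-(((∏ i, (1 + ∑ k, (T i k / that k) * f0 k)) ^ ((1 : ℝ) / N)) / N) *
          ∑ i, ((T i j / that j) / (1 + ∑ k, (T i k / that k) * f0 k)) *
               ((T i l / that l) / (1 + ∑ k, (T i k / that k) * f0 k))) * ψ l) < 0 := by
  intro ψ hψ
  rw [quadForm_smul_gram_eq_sum_sq]
  have hTWR : 0 < ∏ i, (1 + ∑ k, (T i k / that k) * f0 k) := prod_pos fun i _ => hpos i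
  have hcoeff : -((∏ i, (1 + ∑ k, (T i k / that k) * f0 k)) ^ ((1 : ℝ) / N) / N) < 0 :=
    neg_neg_of_pos (div_pos (Real.rpow_pos_of_pos hTWR _) (Nat.cast_pos.mpr hN))
  exact mul_neg_of_neg_of_pos hcoeff <| sum_sq_sum_mul_pos
    (ker_trivial_div_div hker (fun k => (hthat k).ne') fun i => (hpos i).ne') hψ

/-- At a critical point of TWR_N in G \ ∂G₀, the Hessian of [TWR_N]^{1/N},
namely −(TWR^{1/N}/N)·Σᵢ yᵢᵀyᵢ with yᵢ = (tᵢ/t̂)/(1+⟨tᵢ/t̂,f₀⟩), is negative definite. -/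
theorem stmt9 (N M : ℕ) (hN : 0 < N) (T : Fin N → Fin M → ℝ) (that : Fin M → ℝ)
    (hthat : ∀ k, 0 < that k)
    (hker : ∀ ψ : Fin M → ℝ, (∀ i, ∑ k, T i k * ψ k = 0) → ψ = 0)
    (f0 : Fin M → ℝ) (h0 : ∀ k, 0 ≤ f0 k)
    (hpos : ∀ i, 0 < 1 + ∑ k, (T i k / that k) * f0 k)
    (hgrad : ∀ j, (∑ i, (T i j / that j) / (1 + ∑ k, (T i k / that k) * f0 k)) = 0) :
    ∀ ψ : Fin M → ℝ, ψ ≠ 0 →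
      (∑ j, ∑ l, ψ j *
        (-(((∏ i, (1 + ∑ k, (T i k / that k) * f0 k)) ^ ((1 : ℝ) / N)) / N) *
          ∑ i, ((T i j / that j) / (1 + ∑ k, (T i k / that k) * f0 k)) *
               ((T i l / that l) / (1 + ∑ k, (T i k / that k) * f0 k))) * ψ l) < 0 :=
  stmt9_general N M hN T that hthat hker f0 hpos
end

section
/- Under Assumptions (a), (b), (c) of the multivariate optimal-f problem, if a maximizer of TWR_N over G lies in the interior of G, then it is the unique maximizer of TWR_N on G. -/
/-- If a maximizer of TWR_N over G lies in the interior of G, it is the unique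
maximizer on G. -/
theorem stmt14 (N M : ℕ) (T : Fin N → Fin M → ℝ) (that : Fin M → ℝ)
    (hthat : ∀ k, 0 < that k)
    (hloss : ∀ k, ∃ i, T i k = -that k)
    (hbound : ∀ i k, T i k < 0 → -that k ≤ T i k)
    (ha : ∀ f : Fin M → ℝ, (∀ k, 0 ≤ f k) → f ≠ 0 →
      ∃ i, ∑ k, (T i k / that k) * f k < 0)
    (hb : ∀ k, 0 < ∑ i, T i k)
    (hc : ∀ ψ : Fin M → ℝ, (∀ i, ∑ k, T i k * ψ k = 0) → ψ = 0)
    (f0 : Fin M → ℝ)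
    (hint : f0 ∈ interior {f : Fin M → ℝ |
      (∀ k, 0 ≤ f k) ∧ ∀ i, 0 ≤ 1 + ∑ k, (T i k / that k) * f k})
    (hmax : ∀ g : Fin M → ℝ,
      ((∀ k, 0 ≤ g k) ∧ ∀ i, 0 ≤ 1 + ∑ k, (T i k / that k) * g k) →
      ∏ i, (1 + ∑ k, (T i k / that k) * g k) ≤
        ∏ i, (1 + ∑ k, (T i k / that k) * f0 k)) :
    ∀ f1 : Fin M → ℝ,
      ((∀ k, 0 ≤ f1 k) ∧ ∀ i, 0 ≤ 1 + ∑ k, (T i k / that k) * f1 k) →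
      (∀ g : Fin M → ℝ,
        ((∀ k, 0 ≤ g k) ∧ ∀ i, 0 ≤ 1 + ∑ k, (T i k / that k) * g k) →
        ∏ i, (1 + ∑ k, (T i k / that k) * g k) ≤
          ∏ i, (1 + ∑ k, (T i k / that k) * f1 k)) →
      f1 = f0 := by
  intro f1 hf1 hmax1
  have hf0 : f0 ∈ {f : Fin M → ℝ |
      (∀ k, 0 ≤ f k) ∧ ∀ i, 0 ≤ 1 + ∑ k, (T i k / that k) * f k} :=
    interior_subset hint
  set x : Fin N → ℝ := fun i => 1 + ∑ k, (T i k / that k) * f0 k with hxdef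
  set y : Fin N → ℝ := fun i => 1 + ∑ k, (T i k / that k) * f1 k with hydef
  clear_value x y
  -- 0 is feasible
  have h0feas : ((∀ k, (0:ℝ) ≤ (0 : Fin M → ℝ) k) ∧
      ∀ i, 0 ≤ 1 + ∑ k, (T i k / that k) * (0 : Fin M → ℝ) k) := by
    refine ⟨fun k => le_refl 0, fun i => ?_⟩
    simp
  have hV1 : (1:ℝ) ≤ ∏ i, x i := by
    have h := hmax 0 h0feas
    simpa using h
  have hVpos : 0 < ∏ i, x i := lt_of_lt_of_le one_pos hV1
  have heq : ∏ i, y i = ∏ i, x i := by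
    refine le_antisymm ?_ ?_
    · have h := hmax f1 hf1
      simpa [hxdef, hydef] using h
    · have h := hmax1 f0 hf0
      simpa [hxdef, hydef] using h
  have hYpos : 0 < ∏ i, y i := heq ▸ hVpos
  have hxpos : ∀ i, 0 < x i := by
    intro i
    have h0 : 0 ≤ x i := by rw [hxdef]; exact hf0.2 i
    rcases lt_or_eq_of_le h0 with h | h
    · exact h
    · exfalso
      have : ∏ j, x j = 0 := Finset.prod_eq_zero (Finset.mem_univ i) h.symm
      exact hVpos.ne' this
  have hypos : ∀ i, 0 < y i := by
    intro i
    have h0 : 0 ≤ y i := by rw [hydef]; exact hf1.2 i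
    rcases lt_or_eq_of_le h0 with h | h
    · exact h
    · exfalso
      have : ∏ j, y j = 0 := Finset.prod_eq_zero (Finset.mem_univ i) h.symm
      exact hYpos.ne' this
  -- the midpoint
  set m : Fin M → ℝ := fun k => (f0 k + f1 k) / 2 with hmdef
  have hmfactor : ∀ i, 1 + ∑ k, (T i k / that k) * m k = (x i + y i) / 2 := by
    intro i
    have : ∑ k, (T i k / that k) * m k
        = ((∑ k, (T i k / that k) * f0 k) + ∑ k, (T i k / that k) * f1 k) / 2 := by
      rw [← Finset.sum_add_distrib, Finset.sum_div]
      exact Finset.sum_congr rfl fun k _ => by simp [hmdef]; ring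
    rw [this]; simp only [hxdef, hydef]; ring
  have hmfeas : ((∀ k, 0 ≤ m k) ∧ ∀ i, 0 ≤ 1 + ∑ k, (T i k / that k) * m k) := by
    refine ⟨fun k => ?_, fun i => ?_⟩
    · have h0 := hf0.1 k
      have h1 := hf1.1 k
      simp only [hmdef]
      linarith
    rw [hmfactor i]
    have := (hxpos i).le
    have := (hypos i).le
    linarith
  have hm : ∏ i, ((x i + y i) / 2) ≤ ∏ i, x i := by
    have h := hmax m hmfeas
    calc ∏ i, ((x i + y i) / 2) = ∏ i, (1 + ∑ k, (T i k / that k) * m k) := by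
          exact Finset.prod_congr rfl fun i _ => (hmfactor i).symm
      _ ≤ ∏ i, x i := h
  -- squared AM-GM per factor
  have key : ∀ i, x i = y i := by
    by_contra hne
    push_neg at hne
    obtain ⟨j, hj⟩ := hne
    have hlt : ∏ i, (x i * y i) < ∏ i, ((x i + y i) / 2) ^ 2 := by
      apply Finset.prod_lt_prod
      · intro i _
        exact mul_pos (hxpos i) (hypos i)
      · intro i _
        nlinarith [sq_nonneg (x i - y i)]
      · refine ⟨j, Finset.mem_univ j, ?_⟩
        have hd : x j - y j ≠ 0 := sub_ne_zero_of_ne hj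
        have h2 : (x j - y j) ^ 2 ≠ 0 := pow_ne_zero 2 hd
        have hp : 0 < (x j - y j) ^ 2 := (sq_nonneg _).lt_of_ne (Ne.symm h2)
        nlinarith [hp]
    have h1 : ∏ i, (x i * y i) = (∏ i, x i) ^ 2 := by
      rw [Finset.prod_mul_distrib, heq, sq]
    have h2 : ∏ i, ((x i + y i) / 2) ^ 2 = (∏ i, ((x i + y i) / 2)) ^ 2 := by
      rw [Finset.prod_pow]
    have h3 : (∏ i, ((x i + y i) / 2)) ^ 2 ≤ (∏ i, x i) ^ 2 := by
      have hnn : 0 ≤ ∏ i, ((x i + y i) / 2) :=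
        Finset.prod_nonneg fun i _ => by linarith [(hxpos i).le, (hypos i).le]
      exact pow_le_pow_left₀ hnn hm 2
    rw [h1] at hlt
    rw [h2] at hlt
    linarith
  -- conclude via hc
  have hpsi : (fun k => (f1 k - f0 k) / that k) = 0 := by
    apply hc
    intro i
    have hsum : ∑ k, T i k * ((f1 k - f0 k) / that k)
        = (∑ k, (T i k / that k) * f1 k) - ∑ k, (T i k / that k) * f0 k := by
      rw [← Finset.sum_sub_distrib]
      refine Finset.sum_congr rfl fun k _ => ?_
      have hk := (hthat k).ne'
      field_simp
    rw [hsum]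
    have := key i
    rw [hxdef, hydef] at this
    simp only at this
    linarith [this]
  funext k
  have hk := congrFun hpsi k
  simp only [Pi.zero_apply] at hk
  have : f1 k - f0 k = 0 := by
    have hne := (hthat k).ne'
    field_simp at hk
    linarith [hk]
  linarith
end

section
/- Under Assumptions (a), (b), (c), the maximizer of TWR_N over G is unique, even if it lies on the boundary ∂G of G. -/
/-- Optimal f uniqueness: under assumptions (a), (b), (c) the maximizer of TWR_N
on G is unique, even if it lies on the boundary. -/
theorem stmt16 (N M : ℕ) (T : Fin N → Fin M → ℝ) (that : Fin M → ℝ)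
    (hthat : ∀ k, 0 < that k)
    (hloss : ∀ k, ∃ i, T i k = -that k)
    (hbound : ∀ i k, T i k < 0 → -that k ≤ T i k)
    (ha : ∀ f : Fin M → ℝ, (∀ k, 0 ≤ f k) → f ≠ 0 →
      ∃ i, ∑ k, (T i k / that k) * f k < 0)
    (hb : ∀ k, 0 < ∑ i, T i k)
    (hc : ∀ ψ : Fin M → ℝ, (∀ i, ∑ k, T i k * ψ k = 0) → ψ = 0) :
    ∀ f1 f2 : Fin M → ℝ,
      ((∀ k, 0 ≤ f1 k) ∧ ∀ i, 0 ≤ 1 + ∑ k, (T i k / that k) * f1 k) →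
      ((∀ k, 0 ≤ f2 k) ∧ ∀ i, 0 ≤ 1 + ∑ k, (T i k / that k) * f2 k) →
      (∀ g : Fin M → ℝ,
        ((∀ k, 0 ≤ g k) ∧ ∀ i, 0 ≤ 1 + ∑ k, (T i k / that k) * g k) →
        ∏ i, (1 + ∑ k, (T i k / that k) * g k) ≤
          ∏ i, (1 + ∑ k, (T i k / that k) * f1 k)) →
      (∀ g : Fin M → ℝ,
        ((∀ k, 0 ≤ g k) ∧ ∀ i, 0 ≤ 1 + ∑ k, (T i k / that k) * g k) →
        ∏ i, (1 + ∑ k, (T i k / that k) * g k) ≤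
          ∏ i, (1 + ∑ k, (T i k / that k) * f2 k)) →
      f1 = f2 := by
  intro f1 f2 hf1 hf2 hmax1 hmax2
  obtain ⟨hf1n, hf1G⟩ := hf1
  obtain ⟨hf2n, hf2G⟩ := hf2
  set a : Fin N → ℝ := fun i => 1 + ∑ k, (T i k / that k) * f1 k with hadef
  set b : Fin N → ℝ := fun i => 1 + ∑ k, (T i k / that k) * f2 k with hbdef
  have hf1G' : ∀ i, 0 ≤ a i := hf1G
  have hf2G' : ∀ i, 0 ≤ b i := hf2G
  have haeq : ∀ i, a i = 1 + ∑ k, (T i k / that k) * f1 k := fun i => congrFun hadef i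
  have hbeq : ∀ i, b i = 1 + ∑ k, (T i k / that k) * f2 k := fun i => congrFun hbdef i
  clear_value a b
  have hpa : ∏ i, (1 + ∑ k, (T i k / that k) * f1 k) = ∏ i, a i :=
    Finset.prod_congr rfl (fun i _ => (haeq i).symm)
  have hpb : ∏ i, (1 + ∑ k, (T i k / that k) * f2 k) = ∏ i, b i :=
    Finset.prod_congr rfl (fun i _ => (hbeq i).symm)
  -- max values are equal
  have hVab : ∏ i, a i = ∏ i, b i := by
    have h1 := hmax2 f1 ⟨hf1n, hf1G⟩
    have h2 := hmax1 f2 ⟨hf2n, hf2G⟩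
    rw [hpa] at h1
    rw [hpb] at h2
    exact le_antisymm h1 h2
  -- value at 0 is 1, so max ≥ 1
  have h0feas : ((∀ k, (0:ℝ) ≤ (0 : Fin M → ℝ) k) ∧
      ∀ i, 0 ≤ 1 + ∑ k, (T i k / that k) * (0 : Fin M → ℝ) k) := by
    constructor
    · intro k; simp
    · intro i; simp
  have hV1 : (1:ℝ) ≤ ∏ i, a i := by
    have := hmax1 0 h0feas
    simpa using this
  -- all factors positive
  have hapos : ∀ i, 0 < a i := by
    intro i
    rcases lt_or_eq_of_le (hf1G' i) with h | h
    · exact h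
    · exfalso
      have : ∏ j, a j = 0 := Finset.prod_eq_zero (Finset.mem_univ i) h.symm
      linarith
  have hbpos : ∀ i, 0 < b i := by
    intro i
    rcases lt_or_eq_of_le (hf2G' i) with h | h
    · exact h
    · exfalso
      have : ∏ j, b j = 0 := Finset.prod_eq_zero (Finset.mem_univ i) h.symm
      rw [← hVab] at this
      linarith
  by_contra hne
  -- some factor differs
  have hex : ∃ i, a i ≠ b i := by
    by_contra hall
    push_neg at hall
    apply hne
    have hψ : (fun k => (f1 k - f2 k) / that k) = 0 := by
      apply hc
      intro i
      have h1 : ∑ k, T i k * ((f1 k - f2 k) / that k)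
          = ∑ k, ((T i k / that k) * f1 k - (T i k / that k) * f2 k) := by
        apply Finset.sum_congr rfl
        intro k _
        have := (hthat k).ne'
        field_simp
      rw [h1, Finset.sum_sub_distrib]
      have heq := hall i
      rw [haeq i, hbeq i] at heq
      linarith [add_left_cancel heq]
    funext k
    have := congrFun hψ k
    simp only [Pi.zero_apply] at this
    have ht := (hthat k).ne'
    field_simp at this
    linarith
  obtain ⟨i0, hi0⟩ := hex
  -- midpoint
  set m : Fin M → ℝ := fun k => (f1 k + f2 k) / 2 with hmdef
  have hcab : ∀ i, 1 + ∑ k, (T i k / that k) * m k = (a i + b i) / 2 := by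
    intro i
    rw [haeq i, hbeq i]
    simp only [hmdef]
    have h1 : ∀ k ∈ Finset.univ, (T i k / that k) * ((f1 k + f2 k) / 2)
        = (T i k / that k) * f1 k / 2 + (T i k / that k) * f2 k / 2 := by
      intro k _; ring
    rw [Finset.sum_congr rfl h1, Finset.sum_add_distrib, ← Finset.sum_div, ← Finset.sum_div]
    ring
  have hmfeas : ((∀ k, 0 ≤ m k) ∧ ∀ i, 0 ≤ 1 + ∑ k, (T i k / that k) * m k) := by
    constructor
    · intro k; have h1 := hf1n k; have h2 := hf2n k
      simp only [hmdef]; positivity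
    · intro i
      rw [hcab i]
      linarith [hapos i, hbpos i]
  have hcle : ∏ i, (1 + ∑ k, (T i k / that k) * m k) ≤ ∏ i, a i := hmax1 m hmfeas
  have hcab' : ∏ i, (1 + ∑ k, (T i k / that k) * m k) = ∏ i, ((a i + b i) / 2) :=
    Finset.prod_congr rfl (fun i _ => hcab i)
  rw [hcab'] at hcle
  -- squared strict inequality
  have hsq : ∏ i, (a i * b i) < ∏ i, ((a i + b i) / 2)^2 := by
    apply Finset.prod_lt_prod
    · intro i _; exact mul_pos (hapos i) (hbpos i)
    · intro j _
      nlinarith [sq_nonneg (a j - b j)]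
    · refine ⟨i0, Finset.mem_univ i0, ?_⟩
      have h1 := hapos i0; have h2 := hbpos i0
      have hne2 : a i0 - b i0 ≠ 0 := sub_ne_zero.mpr hi0
      have h3 : 0 < (a i0 - b i0)^2 := by positivity
      nlinarith
  have hab : ∏ i, (a i * b i) = (∏ i, a i) * (∏ i, a i) := by
    rw [Finset.prod_mul_distrib, hVab]
  have hc2 : ∏ i, ((a i + b i) / 2)^2 = (∏ i, ((a i + b i) / 2))^2 := by
    rw [← Finset.prod_pow]
  have hcnn : 0 ≤ ∏ i, ((a i + b i) / 2) := by
    apply Finset.prod_nonneg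
    intro i _
    linarith [hapos i, hbpos i]
  have hVnn : (0:ℝ) ≤ ∏ i, a i := by linarith
  nlinarith [hsq, hab, hc2, hcle, hcnn, hVnn]
end

section
/- For M = 1: let t₁,…,t_N ∈ ℝ with at least one t_i < 0, \hat{t} := max{|t_i| : t_i < 0}, and Σ_{i=1}^N t_i > 0. Then the function TWR_N(φ) = ∏_{i=1}^N (1 + φ t_i/\hat{t}) has a unique maximizer φ* on [0,1], and φ* ∈ (0,1) with TWR_N(φ*) > 1. -/
/-!
Normalize the returns to `s i = t i / t̂ ≥ -1`, so that some `s j = -1`. Then `TWR` is continuous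
with `TWR 0 = 1`, `TWR 1 = 0` and `TWR' 0 = ∑ s i > 0`, so its maximum over `[0, 1]` exceeds `1`
and is attained in `(0, 1)`. Every maximizer lies in `[0, 1)`, where all factors are positive and
`log TWR = ∑ log (1 + φ s i)` is strictly concave because the `j`-th summand is not affine;
hence the maximizer is unique.
-/

open Set Filter Topology Real

theorem StrictConcaveOn.comp_affineMap_of_injective {𝕜 E F β : Type*} [Ring 𝕜]
    [PartialOrder 𝕜] [AddCommGroup E] [AddCommGroup F] [Module 𝕜 E] [Module 𝕜 F]
    [AddCommMonoid β] [PartialOrder β] [SMul 𝕜 β] {f : F → β} {s : Set F}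
    (hf : StrictConcaveOn 𝕜 s f) (g : E →ᵃ[𝕜] F) (hg : Function.Injective g) :
    StrictConcaveOn 𝕜 (g ⁻¹' s) (f ∘ g) :=
  ⟨hf.1.affine_preimage g, fun _ hx _ hy hxy _ _ ha hb hab => by
    simpa only [Function.comp_apply, Convex.combo_affine_apply hab] using
      hf.2 hx hy (hg.ne hxy) ha hb hab⟩

theorem ConcaveOn.fun_sum {𝕜 E β ι : Type*} [Semiring 𝕜] [PartialOrder 𝕜] [AddCommMonoid E]
    [AddCommMonoid β] [PartialOrder β] [IsOrderedAddMonoid β] [SMul 𝕜 E] [Module 𝕜 β]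
    {s : Set E} (hs : Convex 𝕜 s) {u : Finset ι} {f : ι → E → β}
    (hf : ∀ i ∈ u, ConcaveOn 𝕜 s (f i)) : ConcaveOn 𝕜 s fun x => ∑ i ∈ u, f i x := by
  simpa only [← Finset.sum_apply] using
    Finset.sum_induction f (ConcaveOn 𝕜 s) (fun _ _ => ConcaveOn.add) (concaveOn_const 0 hs) hf

theorem HasDerivAt.eventually_lt_nhdsGT {f : ℝ → ℝ} {f' x : ℝ} (hf : HasDerivAt f f' x)
    (hf' : 0 < f') : ∀ᶠ y in 𝓝[>] x, f x < f y := by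
  have hslope : ∀ᶠ y in 𝓝[>] x, 0 < slope f x y :=
    ((hasDerivAt_iff_tendsto_slope.1 hf).mono_left (nhdsGT_le_nhdsNE x)).eventually
      (eventually_gt_nhds hf')
  filter_upwards [hslope, self_mem_nhdsWithin] with y hy hxy
  rw [slope_def_field] at hy
  exact sub_pos.1 ((div_pos_iff_of_pos_right (sub_pos.2 hxy)).1 hy)

theorem strictConcaveOn_log_one_add_mul {a : ℝ} (ha : a ≠ 0) :
    StrictConcaveOn ℝ {x | 0 < 1 + x * a} fun x => log (1 + x * a) :=
  strictConcaveOn_log_Ioi.comp_affineMap_of_injective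
    (AffineMap.const ℝ ℝ (1 : ℝ) + (LinearMap.mulRight ℝ a).toAffineMap)
    fun _ _ h => mul_right_cancel₀ ha (add_left_cancel h)

theorem concaveOn_log_one_add_mul (a : ℝ) :
    ConcaveOn ℝ {x | 0 < 1 + x * a} fun x => log (1 + x * a) := by
  rcases eq_or_ne a 0 with rfl | ha
  · simpa using concaveOn_const (𝕜 := ℝ) (0 : ℝ) (convex_univ (𝕜 := ℝ) (E := ℝ))
  · exact (strictConcaveOn_log_one_add_mul ha).concaveOn

theorem one_add_mul_pos_of_mem_Ico {a φ : ℝ} (ha : -1 ≤ a) (hφ : φ ∈ Ico 0 1) :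
    0 < 1 + φ * a := by
  nlinarith [hφ.2, mul_le_mul_of_nonneg_left ha hφ.1]

/-- The terminal wealth relative `TWR(φ) = ∏ (1 + φ tᵢ / t̂)`, written for the normalized
returns `s i = tᵢ / t̂`. -/
def twr {ι : Type*} [Fintype ι] (s : ι → ℝ) (φ : ℝ) : ℝ := ∏ i, (1 + φ * s i)

namespace twr

variable {ι : Type*} [Fintype ι] {s : ι → ℝ}

@[simp] theorem apply_zero : twr s 0 = 1 := by simp [twr]

theorem apply_one_eq_zero {j : ι} (hj : s j = -1) : twr s 1 = 0 :=
  Finset.prod_eq_zero (Finset.mem_univ j) (by rw [hj]; ring)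

theorem continuous : Continuous (twr s) :=
  continuous_finsetProd _ fun _ _ => by fun_prop

theorem hasDerivAt_zero : HasDerivAt (twr s) (∑ i, s i) 0 := by
  classical
  refine (HasDerivAt.fun_finsetProd (u := Finset.univ) fun i _ =>
    ((hasDerivAt_id' (0 : ℝ)).mul_const (s i)).const_add 1).congr_deriv ?_
  simp

theorem strictConcaveOn_log (hs : ∃ j, s j ≠ 0) :
    StrictConcaveOn ℝ {φ | ∀ i, 0 < 1 + φ * s i} fun φ => log (twr s φ) := by
  classical
  obtain ⟨j, hj⟩ := hs
  have hconvex : Convex ℝ {φ | ∀ i, 0 < 1 + φ * s i} := by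
    simpa only [ofPred_forall] using convex_iInter fun i => (concaveOn_log_one_add_mul (s i)).1
  have hsub : ∀ i, {φ | ∀ i, 0 < 1 + φ * s i} ⊆ {φ | 0 < 1 + φ * s i} := fun i _ h => h i
  have hsum := ((strictConcaveOn_log_one_add_mul hj).subset (hsub j) hconvex).add_concaveOn
    (ConcaveOn.fun_sum hconvex (u := Finset.univ.erase j) fun i _ =>
      (concaveOn_log_one_add_mul (s i)).subset (hsub i) hconvex)
  refine hsum.congr fun φ hφ => ?_
  rw [Pi.add_apply, Finset.add_sum_erase _ (fun i => log (1 + φ * s i)) (Finset.mem_univ j)]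
  exact (log_prod (s := Finset.univ) fun i _ => (hφ i).ne').symm

theorem mem_Ico_of_isMaxOn_Icc {j : ι} (hj : s j = -1) {φ : ℝ} (hφ : φ ∈ Icc 0 1)
    (hmax : IsMaxOn (twr s) (Icc 0 1) φ) : φ ∈ Ico 0 1 := by
  refine ⟨hφ.1, hφ.2.lt_of_ne ?_⟩
  rintro rfl
  exact absurd (hmax (left_mem_Icc.2 zero_le_one)) (by simp [apply_one_eq_zero hj])

theorem exists_isMaxOn_Icc (hsum : 0 < ∑ i, s i) {j : ι} (hj : s j = -1) :
    ∃ φ ∈ Ioo (0 : ℝ) 1, IsMaxOn (twr s) (Icc 0 1) φ ∧ 1 < twr s φ := by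
  obtain ⟨φ, hφ, hmax⟩ := isCompact_Icc.exists_isMaxOn (nonempty_Icc.2 zero_le_one)
    (twr.continuous (s := s)).continuousOn
  obtain ⟨x, hx, hx01⟩ :=
    ((hasDerivAt_zero.eventually_lt_nhdsGT hsum).and (Ioo_mem_nhdsGT zero_lt_one)).exists
  have hφ1 : 1 < twr s φ := by
    rw [← apply_zero (s := s)]
    exact hx.trans_le (hmax (Ioo_subset_Icc_self hx01))
  refine ⟨φ, ⟨hφ.1.lt_of_ne ?_, (mem_Ico_of_isMaxOn_Icc hj hφ hmax).2⟩, hmax, hφ1⟩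
  rintro rfl
  simp at hφ1

theorem eq_of_isMaxOn_Icc (hs : ∀ i, -1 ≤ s i) {j : ι} (hj : s j = -1) {φ ψ : ℝ}
    (hφ : φ ∈ Icc 0 1) (hψ : ψ ∈ Icc 0 1) (hφmax : IsMaxOn (twr s) (Icc 0 1) φ)
    (hψmax : IsMaxOn (twr s) (Icc 0 1) ψ) : φ = ψ := by
  have hIco : Ico 0 1 ⊆ {φ | ∀ i, 0 < 1 + φ * s i} := fun _ hφ i =>
    one_add_mul_pos_of_mem_Ico (hs i) hφ
  have hlog {φ : ℝ} (hmax : IsMaxOn (twr s) (Icc 0 1) φ) :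
      IsMaxOn (fun x => log (twr s x)) (Ico 0 1) φ := fun _ hx =>
    log_le_log (Finset.prod_pos fun i _ => hIco hx i) (hmax (Ico_subset_Icc_self hx))
  exact ((strictConcaveOn_log ⟨j, by norm_num [hj]⟩).subset hIco (convex_Ico 0 1)).eq_of_isMaxOn
    (hlog hφmax) (hlog hψmax) (mem_Ico_of_isMaxOn_Icc hj hφ hφmax)
    (mem_Ico_of_isMaxOn_Icc hj hψ hψmax)

end twr

/-- Univariate optimal f: TWR_N(φ) = ∏ (1 + φ tᵢ/t̂) has a unique maximizer
φ* on [0,1], and φ* ∈ (0,1) with TWR_N(φ*) > 1. -/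
theorem stmt17 (N : ℕ) (t : Fin N → ℝ) (that : ℝ) (hthatpos : 0 < that)
    (hloss : ∃ i, t i = -that)
    (hbound : ∀ i, t i < 0 → -that ≤ t i)
    (hsum : 0 < ∑ i, t i) :
    ∃ φ ∈ Set.Ioo (0 : ℝ) 1,
      (∀ ψ ∈ Set.Icc (0 : ℝ) 1,
        ∏ i, (1 + ψ * (t i / that)) ≤ ∏ i, (1 + φ * (t i / that))) ∧
      (∀ ψ ∈ Set.Icc (0 : ℝ) 1,
        (∀ χ ∈ Set.Icc (0 : ℝ) 1,
          ∏ i, (1 + χ * (t i / that)) ≤ ∏ i, (1 + ψ * (t i / that))) → ψ = φ) ∧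
      1 < ∏ i, (1 + φ * (t i / that)) := by
  obtain ⟨j, hj⟩ := hloss
  set s : Fin N → ℝ := fun i => t i / that
  have hs (i : Fin N) : -1 ≤ s i := by
    rw [le_div_iff₀ hthatpos]
    rcases lt_or_ge (t i) 0 with hneg | hnonneg
    · linarith [hbound i hneg]
    · linarith
  have hsj : s j = -1 := by simp [s, hj, hthatpos.ne']
  have hs_sum : 0 < ∑ i, s i := by
    simpa only [s, ← Finset.sum_div] using div_pos hsum hthatpos
  obtain ⟨φ, hφ, hmax, hφ1⟩ := twr.exists_isMaxOn_Icc hs_sum hsj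
  exact ⟨φ, hφ, hmax, fun ψ hψ hψmax =>
    twr.eq_of_isMaxOn_Icc hs hsj hψ (Ioo_subset_Icc_self hφ) hψmax hmax, hφ1⟩
end
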